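/- For all x, y ∈ ℝ∖{0} and every r > 0, τ_x^κ(χ_{[−r,r]})(y) = ν^{κ,+}_{x,y}([−r,r]), i.e. the Dunkl translate of the indicator of [−r,r] equals the integral of χ_{[−r,r]} against the measure ν^{κ,+}_{x,y}. -/

import Mathlib

noncomputable section
open MeasureTheory Set Real
open scoped ENNReal NNReal

/-- one-dimensional measure `dμ_κ(x) = |x|^{2κ} dx` -/
def muK1 (κ : ℝ) : Measure ℝ :=
  volume.withDensity fun x => ENNReal.ofReal (|x| ^ (2 * κ))

/-- the measure `μ_κ` on `ℝ^d` with density `∏_j |x_j|^{2κ_j}` -/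
def muK (d : ℕ) (κ : Fin d → ℝ) : Measure (Fin d → ℝ) :=
  volume.withDensity fun x => ENNReal.ofReal (∏ j, |x j| ^ (2 * κ j))

/-- the constant `M_κ = Γ(κ+1/2)/(Γ(κ)Γ(1/2))` -/
def Mconst (κ : ℝ) : ℝ := Real.Gamma (κ + 1/2) / (Real.Gamma κ * Real.Gamma (1/2))

/-- `σ_{x,y,z}` -/
def sigma3 (x y z : ℝ) : ℝ := if x ≠ 0 ∧ y ≠ 0 then (x^2 + y^2 - z^2) / (2*x*y) else 0

/-- area of the (possibly degenerate) triangle with side lengths `x,y,z` (Heron) -/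
def triArea (x y z : ℝ) : ℝ :=
  Real.sqrt (((x+y+z)/2) * ((x+y+z)/2 - x) * ((x+y+z)/2 - y) * ((x+y+z)/2 - z))

/-- the kernel `K_κ(x,y,z)` -/
def Kker (κ x y z : ℝ) : ℝ :=
  if |x - y| ≤ z ∧ z ≤ x + y then
    (2:ℝ) ^ (2*κ - 2) * Mconst κ * triArea x y z ^ (2*κ - 2) * (x*y*z) ^ (1 - 2*κ)
  else 0

/-- density of the measure `ν^{κ,+}_{x,y}` with respect to Lebesgue measure -/
def nuDens (κ x y z : ℝ) : ℝ≥0∞ :=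
  ENNReal.ofReal ((1/2) * Kker κ |x| |y| |z| * (1 - sigma3 x y z) * |z| ^ (2*κ))

/-- the measure `ν^{κ,+}_{x,y}` -/
def nuPlus (κ x y : ℝ) : Measure ℝ := volume.withDensity (nuDens κ x y)

/-- the product measure `υ^κ_{x,y} = ν^{κ_1,+}_{x_1,y_1} ⊗ ⋯ ⊗ ν^{κ_d,+}_{x_d,y_d}` -/
def upsilon (d : ℕ) (κ x y : Fin d → ℝ) : Measure (Fin d → ℝ) :=
  volume.withDensity fun z => ∏ j, nuDens (κ j) (x j) (y j) (z j)

/-- the set `ℝ^d_reg` of regular points -/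
def regSet (d : ℕ) : Set (Fin d → ℝ) := {x | ∀ j, x j ≠ 0}

/-- the Euclidean ball of radius `r` centered at the origin -/
def eBall (d : ℕ) (r : ℝ) : Set (Fin d → ℝ) := {x | ∑ j, (x j)^2 < r^2}

/-- the open cube `Q_r` -/
def cubeQ (d : ℕ) (r : ℝ) : Set (Fin d → ℝ) := {x | ∀ j, |x j| < r}

/-- the constant `c_κ` with `c_κ⁻¹ = ∫ e^{-‖x‖²/2} dμ_κ` -/
def cKappa (d : ℕ) (κ : Fin d → ℝ) : ℝ :=
  (∫ x, Real.exp (-(∑ j, (x j)^2) / 2) ∂(muK d κ))⁻¹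

open Classical in
/-- the `ℤ_2^d` Dunkl maximal operator (explicit form), vanishing off `ℝ^d_reg` -/
def Mdunkl (d : ℕ) (κ : Fin d → ℝ) (f : (Fin d → ℝ) → ℝ) (x : Fin d → ℝ) : ℝ≥0∞ :=
  if x ∈ regSet d then
    ⨆ (r : ℝ) (_ : 0 < r), ENNReal.ofReal
      ((cKappa d κ / (muK d κ (eBall d r)).toReal) *
        |∫ y in regSet d, f y * (upsilon d κ x (-y) (eBall d r)).toReal ∂(muK d κ)|)
  else 0

/-- the cube Dunkl maximal operator `M_κ^Q` (explicit form) -/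
def MdunklQ (d : ℕ) (κ : Fin d → ℝ) (f : (Fin d → ℝ) → ℝ) (x : Fin d → ℝ) : ℝ≥0∞ :=
  ⨆ (r : ℝ) (_ : 0 < r), ENNReal.ofReal
    ((cKappa d κ / (muK d κ (cubeQ d r)).toReal) *
      |∫ y in regSet d, f y * (upsilon d κ x (-y) (cubeQ d r)).toReal ∂(muK d κ)|)

/-- the interval `I(x,r) = [max{0,|x|-r}, |x|+r)` -/
def Iset (x r : ℝ) : Set ℝ := Set.Ico (max 0 (|x| - r)) (|x| + r)

/-- the rectangle `R(z,r) = I(z_1,r) × ⋯ × I(z_d,r)` -/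
def Rset (d : ℕ) (z : Fin d → ℝ) (r : ℝ) : Set (Fin d → ℝ) :=
  Set.univ.pi fun j => Iset (z j) r

/-- the weighted maximal operator `M_κ^R` -/
def MR (d : ℕ) (κ : Fin d → ℝ) (f : (Fin d → ℝ) → ℝ) (x : Fin d → ℝ) : ℝ≥0∞ :=
  ⨆ (r : ℝ) (_ : 0 < r),
    (muK d κ (Rset d x r))⁻¹ *
      ∫⁻ y in {y | (fun j => |y j|) ∈ Rset d x r}, ENNReal.ofReal |f y| ∂(muK d κ)

/-- Rösler's explicit formula for the one-dimensional Dunkl translation `τ_x^κ f(y)` -/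
def tauK (κ x : ℝ) (f : ℝ → ℝ) (y : ℝ) : ℝ :=
  (1/2) * (∫ t in Set.Ioo (-1:ℝ) 1,
      f (Real.sqrt (x^2 + y^2 + 2*x*y*t)) *
        (1 + (x + y) / Real.sqrt (x^2 + y^2 + 2*x*y*t)) *
        (Mconst κ * (1 + t) * (1 - t^2) ^ (κ - 1)))
  + (1/2) * (∫ t in Set.Ioo (-1:ℝ) 1,
      f (-Real.sqrt (x^2 + y^2 + 2*x*y*t)) *
        (1 - (x + y) / Real.sqrt (x^2 + y^2 + 2*x*y*t)) *
        (Mconst κ * (1 + t) * (1 - t^2) ^ (κ - 1)))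

/-- an `ℝ≥0∞`-valued `L^p` norm for `ℝ≥0∞`-valued functions -/
def lpNormE {α : Type*} [MeasurableSpace α] (g : α → ℝ≥0∞) (p : ℝ≥0∞) (μ : Measure α) : ℝ≥0∞ :=
  if p = ∞ then essSup g μ else (∫⁻ x, g x ^ p.toReal ∂μ) ^ (1 / p.toReal)

/-- the Hardy–Littlewood maximal operator over cubes centered at `x` -/
def HLmax (d : ℕ) (f : (Fin d → ℝ) → ℝ) (x : Fin d → ℝ) : ℝ≥0∞ :=
  ⨆ (r : ℝ) (_ : 0 < r),
    (volume {y : Fin d → ℝ | ∀ j, |y j - x j| < r})⁻¹ *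
      ∫⁻ y in {y : Fin d → ℝ | ∀ j, |y j - x j| < r}, ENNReal.ofReal |f y| ∂volume

/-!
With `f = χ_{[-r,r]}`, both sides equal `∫_{-1}^{1} f(√(x²+y²+2xyt)) Φ_κ(t) dt`.
In Rösler's formula `f` is even, so `f(±√(x²+y²+2xyt))` coincide and the terms
`±(x+y)/√(x²+y²+2xyt)` cancel; they are integrable against `Φ_κ` because
`(x+y)²(1+t) ≤ 2(x²+y²+2xyt)`. For `ν^{κ,+}_{x,y}`, the substitution `z = ±√(x²+y²+2xyt)` maps
`(-1,1)` bijectively onto each half of the annulus `||x|-|y|| < |z| < |x|+|y|` that carries the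
measure; there `σ_{x,y,z} = -t` and Heron's formula gives `Δ = |x||y|√(1-t²)/2`, so the Jacobian
turns the density of `ν^{κ,+}_{x,y}` into `Φ_κ(t)/2` on each branch.
-/

theorem indicator_one_neg_of_neg_eq {α M : Type*} [InvolutiveNeg α] [Zero M] [One M] {S : Set α}
    (hS : -S = S) (z : α) : S.indicator (1 : α → M) (-z) = S.indicator 1 z := by
  conv_rhs => rw [← hS]
  rfl

theorem integrableOn_one_add_rpow_mul_one_sub_rpow {p q : ℝ} (hp : -1 < p) (hq : -1 < q) :
    IntegrableOn (fun t : ℝ => (1 + t) ^ p * (1 - t) ^ q) (Ioo (-1) 1) := by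
  have left : IntervalIntegrable (fun t : ℝ => (1 + t) ^ p * (1 - t) ^ q) volume (-1) 0 := by
    have h := (intervalIntegral.intervalIntegrable_rpow' (a := 0) (b := 1) hp).comp_add_right 1
    simp only [zero_sub, sub_self, add_comm _ (1 : ℝ)] at h
    refine h.mul_continuousOn fun t ht => ?_
    rw [uIcc_of_le (by norm_num)] at ht
    exact ((continuous_const.sub continuous_id).continuousAt.rpow_const
      (Or.inl (by simp; linarith [ht.2]))).continuousWithinAt
  have right : IntervalIntegrable (fun t : ℝ => (1 + t) ^ p * (1 - t) ^ q) volume 0 1 := by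
    have h := (intervalIntegral.intervalIntegrable_rpow' (a := 1) (b := 0) hq).comp_sub_left 1
    simp only [sub_self, sub_zero] at h
    refine h.continuousOn_mul fun t ht => ?_
    rw [uIcc_of_le (by norm_num)] at ht
    exact ((continuous_const.add continuous_id).continuousAt.rpow_const
      (Or.inl (by simp; linarith [ht.1]))).continuousWithinAt
  exact (intervalIntegrable_iff_integrableOn_Ioo_of_le (by norm_num)).mp (left.trans right)

theorem abs_div_sqrt_mul_sqrt_one_add_le (x y : ℝ) {t : ℝ} (ht : t ≤ 1) :
    |(x + y) / √(x ^ 2 + y ^ 2 + 2 * x * y * t)| * √(1 + t) ≤ √2 := by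
  calc |(x + y) / √(x ^ 2 + y ^ 2 + 2 * x * y * t)| * √(1 + t)
      = √((x + y) ^ 2 * (1 + t)) / √(x ^ 2 + y ^ 2 + 2 * x * y * t) := by
        rw [abs_div, abs_of_nonneg (sqrt_nonneg _), sqrt_mul (sq_nonneg _), sqrt_sq_eq_abs]
        ring
    _ ≤ √2 := by
        refine div_le_of_le_mul₀ (sqrt_nonneg _) (sqrt_nonneg _) ?_
        rw [← sqrt_mul zero_le_two]
        -- `2 (x² + y² + 2xyt) - (x + y)² (1 + t) = (1 - t) (x - y)²`
        exact sqrt_le_sqrt (by nlinarith [mul_nonneg (sub_nonneg.2 ht) (sq_nonneg (x - y))])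

theorem Mconst_pos {κ : ℝ} (hκ : 0 < κ) : 0 < Mconst κ := by
  have := Real.Gamma_pos_of_pos (show 0 < κ + 1 / 2 by linarith)
  have := Real.Gamma_pos_of_pos hκ
  have := Real.Gamma_pos_of_pos (show (0 : ℝ) < 1 / 2 by norm_num)
  unfold Mconst
  positivity

def roslerPhi (κ t : ℝ) : ℝ := Mconst κ * (1 + t) * (1 - t ^ 2) ^ (κ - 1)

section roslerPhi

variable {κ t : ℝ}

theorem roslerPhi_eq (ht : t ∈ Ioo (-1 : ℝ) 1) :
    roslerPhi κ t = Mconst κ * ((1 + t) ^ κ * (1 - t) ^ (κ - 1)) := by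
  have h₁ : 0 < 1 + t := by linarith [ht.1]
  have h₂ : 0 < 1 - t := by linarith [ht.2]
  rw [roslerPhi, show 1 - t ^ 2 = (1 + t) * (1 - t) by ring, mul_rpow h₁.le h₂.le,
    show (1 + t) ^ κ = (1 + t) * (1 + t) ^ (κ - 1) by
      rw [rpow_sub_one h₁.ne', mul_div_cancel₀ _ h₁.ne']]
  ring

theorem roslerPhi_nonneg (hκ : 0 < κ) (ht : t ∈ Ioo (-1 : ℝ) 1) : 0 ≤ roslerPhi κ t := by
  rw [roslerPhi_eq ht]
  exact mul_nonneg (Mconst_pos hκ).le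
    (mul_nonneg (rpow_nonneg (by linarith [ht.1]) _) (rpow_nonneg (by linarith [ht.2]) _))

theorem integrableOn_roslerPhi (hκ : 0 < κ) : IntegrableOn (roslerPhi κ) (Ioo (-1) 1) :=
  IntegrableOn.congr_fun
    ((integrableOn_one_add_rpow_mul_one_sub_rpow (by linarith) (by linarith)).const_mul _)
    (fun _ ht => (roslerPhi_eq ht).symm) measurableSet_Ioo

@[fun_prop]
theorem measurable_roslerPhi : Measurable (roslerPhi κ) := by
  unfold roslerPhi
  fun_prop

end roslerPhi

section tauK

variable {κ : ℝ}

theorem integrableOn_div_sqrt_mul_roslerPhi (hκ : 0 < κ) (x y : ℝ) :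
    IntegrableOn (fun t => (x + y) / √(x ^ 2 + y ^ 2 + 2 * x * y * t) * roslerPhi κ t)
      (Ioo (-1) 1) := by
  refine ((integrableOn_one_add_rpow_mul_one_sub_rpow (p := κ - 1 / 2) (q := κ - 1)
    (by linarith) (by linarith)).const_mul (√2 * Mconst κ)).mono'
    (by fun_prop : Measurable _).aestronglyMeasurable
    (ae_restrict_of_forall_mem measurableSet_Ioo fun t ht => ?_)
  have h₁ : 0 < 1 + t := by linarith [ht.1]
  have hsplit : (1 + t) ^ κ = √(1 + t) * (1 + t) ^ (κ - 1 / 2) := by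
    rw [sqrt_eq_rpow, ← rpow_add h₁]
    ring_nf
  have hrest : 0 ≤ Mconst κ * ((1 + t) ^ (κ - 1 / 2) * (1 - t) ^ (κ - 1)) :=
    mul_nonneg (Mconst_pos hκ).le
      (mul_nonneg (rpow_nonneg h₁.le _) (rpow_nonneg (by linarith [ht.2]) _))
  rw [norm_mul, Real.norm_eq_abs, Real.norm_of_nonneg (roslerPhi_nonneg hκ ht), roslerPhi_eq ht,
    hsplit]
  calc |(x + y) / √(x ^ 2 + y ^ 2 + 2 * x * y * t)| *
        (Mconst κ * (√(1 + t) * (1 + t) ^ (κ - 1 / 2) * (1 - t) ^ (κ - 1)))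
      = (|(x + y) / √(x ^ 2 + y ^ 2 + 2 * x * y * t)| * √(1 + t)) *
          (Mconst κ * ((1 + t) ^ (κ - 1 / 2) * (1 - t) ^ (κ - 1))) := by ring
    _ ≤ √2 * (Mconst κ * ((1 + t) ^ (κ - 1 / 2) * (1 - t) ^ (κ - 1))) :=
        mul_le_mul_of_nonneg_right (abs_div_sqrt_mul_sqrt_one_add_le x y ht.2.le) hrest
    _ = _ := by ring

theorem integrableOn_comp_sqrt_mul_roslerPhi (hκ : 0 < κ) {f : ℝ → ℝ} (hf : Measurable f)
    {C : ℝ} (hC : ∀ z, ‖f z‖ ≤ C) (x y : ℝ) :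
    IntegrableOn (fun t => f √(x ^ 2 + y ^ 2 + 2 * x * y * t) * roslerPhi κ t) (Ioo (-1) 1) :=
  (integrableOn_roslerPhi hκ).bdd_mul (by fun_prop : Measurable _).aestronglyMeasurable
    (ae_of_all _ fun _ => hC _)

theorem tauK_eq_setIntegral_of_even (hκ : 0 < κ) {f : ℝ → ℝ} (hf_even : ∀ z, f (-z) = f z)
    (hf : Measurable f) {C : ℝ} (hC : ∀ z, ‖f z‖ ≤ C) (x y : ℝ) :
    tauK κ x f y = ∫ t in Ioo (-1) 1, f √(x ^ 2 + y ^ 2 + 2 * x * y * t) * roslerPhi κ t := by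
  set F := fun t => f √(x ^ 2 + y ^ 2 + 2 * x * y * t)
  set u := fun t => (x + y) / √(x ^ 2 + y ^ 2 + 2 * x * y * t)
  have hF := integrableOn_comp_sqrt_mul_roslerPhi hκ hf hC x y
  have hFu : IntegrableOn (fun t => F t * (u t * roslerPhi κ t)) (Ioo (-1) 1) :=
    (integrableOn_div_sqrt_mul_roslerPhi hκ x y).bdd_mul
      (by fun_prop : Measurable F).aestronglyMeasurable (ae_of_all _ fun _ => hC _)
  have hplus : ∫ t in Ioo (-1) 1, F t * (1 + u t) * roslerPhi κ t =
      (∫ t in Ioo (-1) 1, F t * roslerPhi κ t) +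
        ∫ t in Ioo (-1) 1, F t * (u t * roslerPhi κ t) := by
    rw [← integral_add hF hFu]
    congr 1 with t
    ring
  have hminus :
      ∫ t in Ioo (-1) 1, f (-√(x ^ 2 + y ^ 2 + 2 * x * y * t)) * (1 - u t) * roslerPhi κ t =
        (∫ t in Ioo (-1) 1, F t * roslerPhi κ t) -
          ∫ t in Ioo (-1) 1, F t * (u t * roslerPhi κ t) := by
    rw [← integral_sub hF hFu]
    congr 1 with t
    rw [hf_even]
    ring
  rw [tauK]
  change 1 / 2 * (∫ t in Ioo (-1) 1, F t * (1 + u t) * roslerPhi κ t) +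
    1 / 2 * ∫ t in Ioo (-1) 1,
      f (-√(x ^ 2 + y ^ 2 + 2 * x * y * t)) * (1 - u t) * roslerPhi κ t = _
  rw [hplus, hminus]
  ring

end tauK

section nuPlus

variable {κ x y t : ℝ}

theorem sqrt_sq_add_sq_add_mul_mem_Ioo (hx : x ≠ 0) (hy : y ≠ 0) (ht : t ∈ Ioo (-1 : ℝ) 1) :
    √(x ^ 2 + y ^ 2 + 2 * x * y * t) ∈ Ioo |(|x| - |y|)| (|x| + |y|) := by
  have hxy : 0 < |x| * |y| := by positivity
  have hxyt : |x * y * t| < |x| * |y| := by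
    rw [abs_mul, abs_mul]
    exact mul_lt_of_lt_one_right hxy (abs_lt.mpr ht)
  obtain ⟨hlo, hhi⟩ := abs_lt.mp hxyt
  constructor
  · rw [lt_sqrt (abs_nonneg _), sq_abs]
    nlinarith [sq_abs x, sq_abs y]
  · rw [sqrt_lt' (by positivity)]
    nlinarith [sq_abs x, sq_abs y]

theorem sq_add_sq_add_mul_pos (hx : x ≠ 0) (hy : y ≠ 0) (ht : t ∈ Ioo (-1 : ℝ) 1) :
    0 < x ^ 2 + y ^ 2 + 2 * x * y * t :=
  sqrt_pos.mp ((abs_nonneg _).trans_lt (sqrt_sq_add_sq_add_mul_mem_Ioo hx hy ht).1)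

theorem image_sqrt_sq_add_sq_add_mul_Ioo (hx : x ≠ 0) (hy : y ≠ 0) :
    (fun t => √(x ^ 2 + y ^ 2 + 2 * x * y * t)) '' Ioo (-1) 1 =
      Ioo |(|x| - |y|)| (|x| + |y|) := by
  refine Subset.antisymm ?_ fun z ⟨hz₁, hz₂⟩ => ?_
  · rintro _ ⟨t, ht, rfl⟩
    exact sqrt_sq_add_sq_add_mul_mem_Ioo hx hy ht
  have hz : 0 ≤ z := (abs_nonneg _).trans hz₁.le
  have hz₁' : (|x| - |y|) ^ 2 < z ^ 2 := by
    rw [← sq_abs (|x| - |y|)]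
    exact pow_lt_pow_left₀ hz₁ (abs_nonneg _) two_ne_zero
  have hz₂' : z ^ 2 < (|x| + |y|) ^ 2 := pow_lt_pow_left₀ hz₂ hz two_ne_zero
  have hxy : |2 * x * y| = 2 * (|x| * |y|) := by rw [abs_mul, abs_mul, abs_two, mul_assoc]
  refine ⟨(z ^ 2 - x ^ 2 - y ^ 2) / (2 * x * y), ?_, ?_⟩
  · rw [mem_Ioo, ← abs_lt, abs_div, hxy, div_lt_one (by positivity), abs_lt]
    constructor <;> nlinarith [sq_abs x, sq_abs y]
  · dsimp only
    rw [show x ^ 2 + y ^ 2 + 2 * x * y * ((z ^ 2 - x ^ 2 - y ^ 2) / (2 * x * y)) = z ^ 2 by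
      field_simp; ring, sqrt_sq hz]

theorem hasDerivAt_sqrt_sq_add_sq_add_mul (h : x ^ 2 + y ^ 2 + 2 * x * y * t ≠ 0) :
    HasDerivAt (fun t => √(x ^ 2 + y ^ 2 + 2 * x * y * t))
      (x * y / √(x ^ 2 + y ^ 2 + 2 * x * y * t)) t := by
  have hA := (((hasDerivAt_id' t).const_mul (2 * x * y)).const_add (x ^ 2 + y ^ 2)).sqrt h
  exact hA.congr_deriv (by field_simp)

theorem injOn_sqrt_sq_add_sq_add_mul (hx : x ≠ 0) (hy : y ≠ 0) :
    InjOn (fun t => √(x ^ 2 + y ^ 2 + 2 * x * y * t)) (Ioo (-1) 1) := by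
  intro t₁ ht₁ t₂ ht₂ h
  rw [sqrt_inj (sq_add_sq_add_mul_pos hx hy ht₁).le (sq_add_sq_add_mul_pos hx hy ht₂).le] at h
  have : 2 * x * y * (t₁ - t₂) = 0 := by linarith
  simpa [hx, hy, sub_eq_zero] using this

theorem sigma3_sqrt (hx : x ≠ 0) (hy : y ≠ 0) (h : 0 ≤ x ^ 2 + y ^ 2 + 2 * x * y * t) :
    sigma3 x y √(x ^ 2 + y ^ 2 + 2 * x * y * t) = -t := by
  rw [sigma3, if_pos ⟨hx, hy⟩, sq_sqrt h]
  field_simp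
  ring

theorem triArea_abs_abs_sqrt (h : 0 ≤ x ^ 2 + y ^ 2 + 2 * x * y * t) :
    triArea |x| |y| √(x ^ 2 + y ^ 2 + 2 * x * y * t) = |x| * |y| / 2 * √(1 - t ^ 2) := by
  set z := √(x ^ 2 + y ^ 2 + 2 * x * y * t)
  have hz : z ^ 2 = |x| ^ 2 + |y| ^ 2 + 2 * x * y * t := by rw [sq_sqrt h, sq_abs, sq_abs]
  have hxy : (x * y) ^ 2 = (|x| * |y|) ^ 2 := by rw [← abs_mul, sq_abs]
  rw [triArea, ← sqrt_sq (by positivity : 0 ≤ |x| * |y| / 2), ← sqrt_mul (sq_nonneg _)]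
  congr 1
  -- Heron: `16 Δ² = ((|x| + |y|)² - z²) (z² - (|x| - |y|)²)`, which equals `4 x² y² (1 - t²)` here
  linear_combination ((|x| + |y|) ^ 2 + (|x| - |y|) ^ 2 - z ^ 2
    - (|x| ^ 2 + |y| ^ 2 + 2 * x * y * t)) / 16 * hz - t ^ 2 / 4 * hxy

theorem Kker_abs_abs_sqrt (hx : x ≠ 0) (hy : y ≠ 0) (ht : t ∈ Ioo (-1 : ℝ) 1) :
    Kker κ |x| |y| √(x ^ 2 + y ^ 2 + 2 * x * y * t) =
      Mconst κ * (1 - t ^ 2) ^ (κ - 1) * √(x ^ 2 + y ^ 2 + 2 * x * y * t) ^ (1 - 2 * κ) /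
        (|x| * |y|) := by
  have hz := sqrt_sq_add_sq_add_mul_mem_Ioo hx hy ht
  have hxy : 0 < |x| * |y| := by positivity
  have ht' : 0 ≤ 1 - t ^ 2 := by nlinarith [ht.1, ht.2]
  rw [Kker, if_pos ⟨hz.1.le, hz.2.le⟩,
    triArea_abs_abs_sqrt (sq_add_sq_add_mul_pos hx hy ht).le,
    mul_rpow (by positivity) (sqrt_nonneg _), div_rpow hxy.le zero_le_two, sqrt_eq_rpow,
    ← rpow_mul ht', mul_rpow hxy.le (sqrt_nonneg _)]
  have h2 : (2 : ℝ) ^ (2 * κ - 2) ≠ 0 := (rpow_pos_of_pos two_pos _).ne'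
  have hxy' : (|x| * |y|) ^ (2 * κ - 2) * (|x| * |y|) ^ (1 - 2 * κ) = (|x| * |y|)⁻¹ := by
    rw [← rpow_add hxy, ← rpow_neg_one]
    ring_nf
  rw [show 1 / 2 * (2 * κ - 2) = κ - 1 by ring]
  set z := √(x ^ 2 + y ^ 2 + 2 * x * y * t)
  calc _ = Mconst κ * (1 - t ^ 2) ^ (κ - 1) * z ^ (1 - 2 * κ) *
        ((|x| * |y|) ^ (2 * κ - 2) * (|x| * |y|) ^ (1 - 2 * κ)) *
        ((2 : ℝ) ^ (2 * κ - 2) / 2 ^ (2 * κ - 2)) := by ring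
    _ = _ := by rw [hxy', div_self h2]; ring

theorem nuDens_sqrt (hx : x ≠ 0) (hy : y ≠ 0) (ht : t ∈ Ioo (-1 : ℝ) 1) :
    nuDens κ x y √(x ^ 2 + y ^ 2 + 2 * x * y * t) =
      ENNReal.ofReal (roslerPhi κ t * √(x ^ 2 + y ^ 2 + 2 * x * y * t) / (2 * (|x| * |y|))) := by
  have hA := sq_add_sq_add_mul_pos hx hy ht
  rw [nuDens, abs_of_nonneg (sqrt_nonneg _), Kker_abs_abs_sqrt hx hy ht, sigma3_sqrt hx hy hA.le]
  set z := √(x ^ 2 + y ^ 2 + 2 * x * y * t)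
  have hz : z ^ (1 - 2 * κ) * z ^ (2 * κ) = z := by
    rw [← rpow_add (sqrt_pos.mpr hA), sub_add_cancel, rpow_one]
  congr 1
  calc _ = Mconst κ * (1 + t) * (1 - t ^ 2) ^ (κ - 1) * (z ^ (1 - 2 * κ) * z ^ (2 * κ)) /
        (2 * (|x| * |y|)) := by ring
    _ = _ := by rw [hz, roslerPhi]

theorem ofReal_abs_div_sqrt_mul_nuDens_sqrt (hx : x ≠ 0) (hy : y ≠ 0) (ht : t ∈ Ioo (-1 : ℝ) 1) :
    ENNReal.ofReal |x * y / √(x ^ 2 + y ^ 2 + 2 * x * y * t)| *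
        nuDens κ x y √(x ^ 2 + y ^ 2 + 2 * x * y * t) =
      ENNReal.ofReal (roslerPhi κ t / 2) := by
  have hz := sqrt_pos.mpr (sq_add_sq_add_mul_pos hx hy ht)
  rw [nuDens_sqrt hx hy ht, ← ENNReal.ofReal_mul (abs_nonneg _), abs_div, abs_mul,
    abs_of_pos hz]
  have hxy : |x| * |y| ≠ 0 := by positivity
  congr 1
  generalize √(x ^ 2 + y ^ 2 + 2 * x * y * t) = z at hz ⊢
  field_simp

theorem nuDens_neg (z : ℝ) : nuDens κ x y (-z) = nuDens κ x y z := by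
  simp only [nuDens, sigma3, abs_neg, neg_sq]

theorem nuDens_eq_zero_of_abs_notMem_Icc {z : ℝ} (hz : |z| ∉ Icc |(|x| - |y|)| (|x| + |y|)) :
    nuDens κ x y z = 0 := by
  rw [mem_Icc] at hz
  rw [nuDens, Kker, if_neg hz, mul_zero, zero_mul, zero_mul, ENNReal.ofReal_zero]

theorem lintegral_nuDens_mul_eq_setLIntegral (h : ℝ → ℝ≥0∞) :
    ∫⁻ z, nuDens κ x y z * h z =
      ∫⁻ z in Ioo (-(|x| + |y|)) (-|(|x| - |y|)|) ∪ Ioo |(|x| - |y|)| (|x| + |y|),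
        nuDens κ x y z * h z := by
  set a := |(|x| - |y|)|
  set b := |x| + |y|
  rw [← lintegral_indicator (measurableSet_Ioo.union measurableSet_Ioo)]
  refine lintegral_congr_ae ?_
  have hnull : ∀ᵐ z, z ∉ ({-b, -a, a, b} : Set ℝ) :=
    measure_eq_zero_iff_ae_notMem.mp ((toFinite _).measure_zero _)
  filter_upwards [hnull] with z hz
  by_cases hU : z ∈ Ioo (-b) (-a) ∪ Ioo a b
  · rw [indicator_of_mem hU]
  rw [indicator_of_notMem hU, nuDens_eq_zero_of_abs_notMem_Icc, zero_mul]
  rintro ⟨h₁, h₂⟩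
  simp only [mem_insert_iff, mem_singleton_iff, not_or] at hz
  simp only [mem_union, mem_Ioo] at hU
  rcases abs_cases z with ⟨hz', _⟩ | ⟨hz', _⟩ <;> rw [hz'] at h₁ h₂
  · exact hU (Or.inr ⟨by grind, by grind⟩)
  · exact hU (Or.inl ⟨by grind, by grind⟩)

theorem lintegral_nuDens_mul_of_even (hx : x ≠ 0) (hy : y ≠ 0) {h : ℝ → ℝ≥0∞}
    (h_even : ∀ z, h (-z) = h z) :
    ∫⁻ z, nuDens κ x y z * h z =
      ∫⁻ t in Ioo (-1) 1, ENNReal.ofReal (roslerPhi κ t) * h √(x ^ 2 + y ^ 2 + 2 * x * y * t) := by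
  set g := fun t => √(x ^ 2 + y ^ 2 + 2 * x * y * t)
  have hg' : ∀ t ∈ Ioo (-1 : ℝ) 1, HasDerivWithinAt g (x * y / g t) (Ioo (-1) 1) t := fun t ht =>
    (hasDerivAt_sqrt_sq_add_sq_add_mul (sq_add_sq_add_mul_pos hx hy ht).ne').hasDerivWithinAt
  have hg_inj : InjOn g (Ioo (-1) 1) := injOn_sqrt_sq_add_sq_add_mul hx hy
  have hg'_neg : ∀ t ∈ Ioo (-1 : ℝ) 1,
      HasDerivWithinAt (fun t => -g t) (-(x * y / g t)) (Ioo (-1) 1) t :=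
    fun t ht => (hg' t ht).neg
  have himg : g '' Ioo (-1) 1 = Ioo |(|x| - |y|)| (|x| + |y|) :=
    image_sqrt_sq_add_sq_add_mul_Ioo hx hy
  have himg_neg : (fun t => -g t) '' Ioo (-1) 1 = Ioo (-(|x| + |y|)) (-|(|x| - |y|)|) := by
    rw [← image_neg_Ioo, ← himg, image_image]
  have hdisj : Disjoint (Ioo (-(|x| + |y|)) (-|(|x| - |y|)|)) (Ioo |(|x| - |y|)| (|x| + |y|)) :=
    disjoint_left.mpr fun z h₁ h₂ => by linarith [h₁.2, h₂.1, abs_nonneg (|x| - |y|)]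
  have hbranch : ∀ t ∈ Ioo (-1 : ℝ) 1,
      ENNReal.ofReal |x * y / g t| * (nuDens κ x y (g t) * h (g t)) =
        ENNReal.ofReal (roslerPhi κ t / 2) * h (g t) := fun t ht => by
    rw [← mul_assoc, ofReal_abs_div_sqrt_mul_nuDens_sqrt hx hy ht]
  rw [lintegral_nuDens_mul_eq_setLIntegral, lintegral_union measurableSet_Ioo hdisj,
    ← himg_neg, ← himg,
    lintegral_image_eq_lintegral_abs_deriv_mul measurableSet_Ioo hg'_neg
      (neg_injective.comp_injOn hg_inj),
    lintegral_image_eq_lintegral_abs_deriv_mul measurableSet_Ioo hg' hg_inj]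
  simp only [abs_neg, nuDens_neg, h_even]
  rw [setLIntegral_congr_fun measurableSet_Ioo hbranch, ← two_mul,
    ← lintegral_const_mul' _ _ ENNReal.ofNat_ne_top]
  refine setLIntegral_congr_fun measurableSet_Ioo fun t _ => ?_
  rw [← mul_assoc, ← ENNReal.ofReal_ofNat 2, ← ENNReal.ofReal_mul zero_le_two,
    mul_div_cancel₀ _ two_ne_zero]

theorem nuPlus_apply_of_neg_eq (hx : x ≠ 0) (hy : y ≠ 0) {S : Set ℝ} (hS : MeasurableSet S)
    (hS_neg : -S = S) :
    nuPlus κ x y S = ∫⁻ t in Ioo (-1) 1,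
      ENNReal.ofReal (S.indicator 1 √(x ^ 2 + y ^ 2 + 2 * x * y * t) * roslerPhi κ t) := by
  have h_even : ∀ z, ENNReal.ofReal (S.indicator 1 (-z)) = ENNReal.ofReal (S.indicator 1 z) :=
    fun z => by rw [indicator_one_neg_of_neg_eq hS_neg]
  have h_density : S.indicator (nuDens κ x y) =
      fun z => nuDens κ x y z * ENNReal.ofReal (S.indicator 1 z) := by
    ext z
    by_cases hz : z ∈ S <;> simp [hz]
  rw [nuPlus, withDensity_apply _ hS, ← lintegral_indicator hS, h_density,
    lintegral_nuDens_mul_of_even hx hy h_even]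
  refine setLIntegral_congr_fun measurableSet_Ioo fun t _ => ?_
  rw [mul_comm]
  exact (ENNReal.ofReal_mul (indicator_nonneg (fun _ _ => zero_le_one) _)).symm

end nuPlus

/-- Explicit formula: the Dunkl translate of `χ_{[-r,r]}` is the measure `ν^{κ,+}_{x,y}` of `[-r,r]`. -/
theorem dunkl_translate_indicator_eq_nuPlus (κ : ℝ) (hκ : 0 < κ) :
    ∀ x y : ℝ, x ≠ 0 → y ≠ 0 → ∀ r : ℝ, 0 < r →
      tauK κ x ((Set.Icc (-r) r).indicator 1) y = (nuPlus κ x y (Set.Icc (-r) r)).toReal := by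
  intro x y hx hy r _
  have h_neg : -Icc (-r) r = Icc (-r) r := by simp
  have hf : Measurable ((Icc (-r) r).indicator (1 : ℝ → ℝ)) :=
    measurable_one.indicator measurableSet_Icc
  have hf_bdd : ∀ z, ‖(Icc (-r) r).indicator (1 : ℝ → ℝ) z‖ ≤ 1 :=
    fun _ => (norm_indicator_le_norm_self _ _).trans (by simp)
  have h_nonneg : ∀ t ∈ Ioo (-1 : ℝ) 1,
      0 ≤ (Icc (-r) r).indicator 1 √(x ^ 2 + y ^ 2 + 2 * x * y * t) * roslerPhi κ t :=
    fun t ht => mul_nonneg (indicator_nonneg (fun _ _ => zero_le_one) _) (roslerPhi_nonneg hκ ht)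
  rw [tauK_eq_setIntegral_of_even hκ (indicator_one_neg_of_neg_eq h_neg) hf hf_bdd,
    nuPlus_apply_of_neg_eq hx hy measurableSet_Icc h_neg,
    ← ofReal_integral_eq_lintegral_ofReal (integrableOn_comp_sqrt_mul_roslerPhi hκ hf hf_bdd x y)
      (ae_restrict_of_forall_mem measurableSet_Ioo h_nonneg),
    ENNReal.toReal_ofReal (setIntegral_nonneg measurableSet_Ioo h_nonneg)]
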